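/- Let G be a finite group acting by ring automorphisms on a finitely generated algebra R over a Noetherian commutative ring k. Then the invariant subalgebra R^G is a finitely generated k-algebra. -/
import Mathlib


/-- The invariant subalgebra `R^G = {r ∈ R | ∀ g, g • r = r}` of an action of a
group `G` on a `k`-algebra `R` by `k`-algebra automorphisms (a multiplicative
semiring action fixing the image of `k`). -/
def invariantSubalgebra (k : Type*) (R : Type*) (G : Type*)
    [CommRing k] [CommRing R] [Algebra k R] [Group G] [MulSemiringAction G R]
    (hk : ∀ (g : G) (c : k), g • (algebraMap k R c) = algebraMap k R c) :
    Subalgebra k R where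
  carrier := {r : R | ∀ g : G, g • r = r}
  add_mem' := fun {a b} ha hb g => by rw [smul_add, ha g, hb g]
  mul_mem' := fun {a b} ha hb g => by rw [smul_mul', ha g, hb g]
  algebraMap_mem' := fun c g => hk g c
  one_mem' := fun g => smul_one g

/-- Noether's theorem on invariant rings: if a finite group `G` acts by
`k`-algebra automorphisms on a finitely generated commutative algebra `R` over a
Noetherian commutative ring `k` (with `|G|` invertible in `k`), then the invariant
subalgebra `R^G` is a finitely generated `k`-algebra. -/
theorem invariantSubalgebra_finiteType
    (k R G : Type*) [CommRing k] [IsNoetherianRing k] [CommRing R] [Algebra k R]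
    [Group G] [Finite G] [MulSemiringAction G R]
    (hk : ∀ (g : G) (c : k), g • (algebraMap k R c) = algebraMap k R c)
    (hft : Algebra.FiniteType k R)
    (hinv : IsUnit ((Nat.card G : k))) :
    Algebra.FiniteType k (invariantSubalgebra k R G hk) := by
  cases nonempty_fintype G
  set B := invariantSubalgebra k R G hk with hB
  -- every element of R is integral over B
  have hint : ∀ x : R, IsIntegral B x := by
    intro x
    have hcoeffs : (↑(prodXSubSMul G R x).coeffs : Set R) ⊆ B.toSubring := by
      intro c hc
      simp only [Finset.coe_sort_coe, Polynomial.coeffs, Finset.coe_image,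
        Set.mem_image, Finset.mem_coe, Polynomial.mem_support_iff] at hc
      obtain ⟨n, -, rfl⟩ := hc
      exact fun g => prodXSubSMul.coeff G R x g n
    refine ⟨(prodXSubSMul G R x).toSubring B.toSubring hcoeffs, ?_, ?_⟩
    · exact (Polynomial.monic_toSubring _ _ _).2 (prodXSubSMul.monic G R x)
    · have : Polynomial.eval₂ (algebraMap B R) x
          ((prodXSubSMul G R x).toSubring B.toSubring hcoeffs)
          = (prodXSubSMul G R x).eval x := by
        rw [Polynomial.eval₂_eq_eval_map]
        congr 1
        ext n
        rw [Polynomial.coeff_map]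
        exact Polynomial.coeff_toSubring' _ _ hcoeffs
      rw [this, prodXSubSMul.eval]
  have hIsInt : Algebra.IsIntegral B R := ⟨hint⟩
  have hftB : Algebra.FiniteType B R :=
    Algebra.FiniteType.of_restrictScalars_finiteType (R := k) (S := B) (A := R)
  have hfin : Module.Finite B R := Algebra.IsIntegral.finite
  exact ⟨fg_of_fg_of_fg k B R hft.1 hfin.1 Subtype.val_injective⟩
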